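/- Let (U,C) be a 3-SAT instance with n_u variables and n_c clauses. Let H be the undirected graph consisting of the graph G_{U,C} together with two additional adjacent vertices v_t and v_q, where v_t is also adjacent to every clause vertex v^c_j. Let dist(i,j) be the shortest-path distance (number of edges) between vertices i and j in H, and let every vertex have acceptability threshold 1 except v_q, which has threshold 2; let D be the digraph on the vertices of H with an arc (i,j) for i ≠ j iff dist(i,j) ≤ θ_i. Then D has a kernel containing v_q if and only if (U,C) is satisfiable. -/

import Mathlib

namespace LD

/-- `K` is a kernel of the digraph with vertex set `S` and arc relation `A`:
independent and absorbing. -/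
def Kernel {V : Type*} (S : Set V) (A : V → V → Prop) (K : Set V) : Prop :=
  K ⊆ S ∧ (∀ i ∈ K, ∀ j ∈ K, ¬ A i j) ∧ ∀ u ∈ S, u ∉ K → ∃ k ∈ K, A u k

/-- Vertices of the graph `H`: variable vertices `(x, b)` (the literal `x` if
`b = true`, `¬x` if `b = false`), clause vertices `Fin nc`, plus the two extra
vertices `v_t` (encoded `true`) and `v_q` (encoded `false`). -/
abbrev MembVtx (U : Type*) (nc : ℕ) := (U × Bool) ⊕ (Fin nc ⊕ Bool)

/-- The extra vertex `v_t`. -/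
def vt {U : Type*} {nc : ℕ} : MembVtx U nc := Sum.inr (Sum.inr true)

/-- The extra vertex `v_q`. -/
def vq {U : Type*} {nc : ℕ} : MembVtx U nc := Sum.inr (Sum.inr false)

/-- Base relation generating the edges of `H`: the gadget graph `G_{U,C}`
(variable pairs adjacent; each clause vertex adjacent to the variable vertices
of its three literals), plus `v_t` adjacent to every clause vertex and to
`v_q`. -/
def membRel {U : Type*} {nc : ℕ} (Cl : Fin nc → Fin 3 → U × Bool) :
    MembVtx U nc → MembVtx U nc → Prop
  | Sum.inl (x, b), Sum.inl (y, c) => x = y ∧ b ≠ c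
  | Sum.inr (Sum.inl j), Sum.inl (x, b) => ∃ m : Fin 3, Cl j m = (x, b)
  | Sum.inr (Sum.inr t), Sum.inr (Sum.inl _) => t = true
  | Sum.inr (Sum.inr t), Sum.inr (Sum.inr s) => t = true ∧ s = false
  | _, _ => False

/-- The undirected graph `H` of the reduction. -/
def membGraph {U : Type*} {nc : ℕ} (Cl : Fin nc → Fin 3 → U × Bool) :
    SimpleGraph (MembVtx U nc) :=
  SimpleGraph.fromRel (membRel Cl)

/-- Acceptability thresholds: `2` for `v_q` and `1` for every other vertex. -/
def membThreshold {U : Type*} [DecidableEq U] {nc : ℕ} (v : MembVtx U nc) : ℕ∞ :=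
  if v = vq then 2 else 1

/-- The digraph `D` of the reduction: an arc `(i,j)` for `i ≠ j` iff the
shortest-path distance between `i` and `j` in `H` is at most `θ i` (vertices in
different connected components are at infinite distance). -/
def membArc {U : Type*} [DecidableEq U] {nc : ℕ} (Cl : Fin nc → Fin 3 → U × Bool)
    (i j : MembVtx U nc) : Prop :=
  i ≠ j ∧ (membGraph Cl).edist i j ≤ membThreshold i

/-- The 3-SAT instance `Cl` is satisfiable: some truth assignment makes at least
one literal of every clause true. -/
def Satisfiable {U : Type*} {nc : ℕ} (Cl : Fin nc → Fin 3 → U × Bool) : Prop :=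
  ∃ σ : U → Bool, ∀ j : Fin nc, ∃ m : Fin 3, σ (Cl j m).1 = (Cl j m).2

end LD

/-!
From `v_q` the digraph `D` reaches exactly `v_t` and the clause vertices (distance at most 2),
while every other vertex has threshold 1, so its arcs are just the edges of `H`. Hence a kernel
containing `v_q` avoids `v_t` and all clause vertices, and on each variable gadget it contains
exactly one of the two literal vertices: at most one by independence, at least one by absorption. These
chosen literals form a truth assignment, and absorption of the clause vertices says precisely
that it satisfies every clause. Conversely, `v_q` together with the true literals of a
satisfying assignment is a kernel.
-/

namespace SimpleGraph

variable {V : Type*} {G : SimpleGraph V} {u v : V}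

lemma edist_le_two_iff :
    G.edist u v ≤ 2 ↔ u = v ∨ G.Adj u v ∨ ∃ w, G.Adj u w ∧ G.Adj w v := by
  rw [le_iff_lt_or_eq, ← one_add_one_eq_two, ENat.lt_add_one_iff ENat.one_ne_top,
    one_add_one_eq_two, edist_le_one_iff_adj_or_eq, edist_eq_two_iff]
  simp only [Set.Nonempty, mem_commonNeighbors, G.adj_comm v]
  tauto

end SimpleGraph

namespace LD

open SimpleGraph

variable {U : Type*} {nc : ℕ} {Cl : Fin nc → Fin 3 → U × Bool}

@[simp]
lemma membGraph_adj_inl_inl {x y : U} {b c : Bool} :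
    (membGraph Cl).Adj (.inl (x, b)) (.inl (y, c)) ↔ x = y ∧ b ≠ c := by
  simp only [membGraph, fromRel_adj, membRel]
  grind

@[simp]
lemma membGraph_adj_inl_clause {p : U × Bool} {j : Fin nc} :
    (membGraph Cl).Adj (.inl p) (.inr (.inl j)) ↔ ∃ m, Cl j m = p := by
  simp [membGraph, membRel]

@[simp]
lemma membGraph_adj_clause_inl {p : U × Bool} {j : Fin nc} :
    (membGraph Cl).Adj (.inr (.inl j)) (.inl p) ↔ ∃ m, Cl j m = p := by
  rw [adj_comm, membGraph_adj_inl_clause]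

@[simp]
lemma not_membGraph_adj_inl_inr_inr {p : U × Bool} {t : Bool} :
    ¬ (membGraph Cl).Adj (.inl p) (.inr (.inr t)) := by
  simp [membGraph, membRel]

lemma membGraph_adj_vq {w : MembVtx U nc} : (membGraph Cl).Adj vq w ↔ w = vt := by
  rcases w with _ | _ | _ <;> simp [membGraph, membRel, vq, vt]

lemma membGraph_adj_vt {w : MembVtx U nc} :
    (membGraph Cl).Adj vt w ↔ (∃ j, w = .inr (.inl j)) ∨ w = vq := by
  rcases w with _ | _ | _ <;> simp [membGraph, membRel, vq, vt]

def assignmentKernel (σ : U → Bool) : Set (MembVtx U nc) :=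
  {v | match v with
    | .inl (x, b) => σ x = b
    | .inr (.inl _) => False
    | .inr (.inr t) => t = false}

variable {σ : U → Bool}

@[simp]
lemma inl_mem_assignmentKernel {x : U} {b : Bool} :
    (.inl (x, b) : MembVtx U nc) ∈ assignmentKernel σ ↔ σ x = b := Iff.rfl

@[simp]
lemma clause_notMem_assignmentKernel {j : Fin nc} :
    (.inr (.inl j) : MembVtx U nc) ∉ assignmentKernel σ := id

@[simp]
lemma vq_mem_assignmentKernel : (vq : MembVtx U nc) ∈ assignmentKernel σ := rfl

@[simp]
lemma vt_notMem_assignmentKernel : (vt : MembVtx U nc) ∉ assignmentKernel σ := Bool.noConfusion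

variable [DecidableEq U]

lemma membArc_iff_adj {v w : MembVtx U nc} (hv : v ≠ vq) :
    membArc Cl v w ↔ (membGraph Cl).Adj v w := by
  rw [membArc, membThreshold, if_neg hv, edist_le_one_iff_adj_or_eq]
  exact ⟨fun ⟨hne, h⟩ => h.resolve_right hne, fun h => ⟨h.ne, .inl h⟩⟩

lemma membArc_vq_iff {w : MembVtx U nc} :
    membArc Cl vq w ↔ w = vt ∨ ∃ j, w = .inr (.inl j) := by
  rw [membArc, membThreshold, if_pos rfl, edist_le_two_iff]
  simp only [membGraph_adj_vq, exists_eq_left, membGraph_adj_vt]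
  constructor
  · rintro ⟨hne, rfl | h | h | rfl⟩ <;> tauto
  · rintro (rfl | h)
    · exact ⟨by simp [vq, vt], .inr (.inl rfl)⟩
    · obtain ⟨j, rfl⟩ := h
      exact ⟨by simp [vq], .inr (.inr (.inl ⟨j, rfl⟩))⟩

lemma assignmentKernel_independent :
    ∀ v ∈ assignmentKernel σ, ∀ w ∈ assignmentKernel σ, ¬ membArc Cl v w := by
  rintro (⟨x, b⟩ | j | t) hv w hw harc
  · rw [membArc_iff_adj (by simp [vq])] at harc
    rcases w with ⟨y, c⟩ | j | t
    · obtain ⟨rfl, hbc⟩ := membGraph_adj_inl_inl.mp harc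
      exact hbc (hv.symm.trans hw)
    · exact clause_notMem_assignmentKernel hw
    · exact not_membGraph_adj_inl_inr_inr harc
  · exact hv
  · obtain rfl : t = false := hv
    rcases membArc_vq_iff.mp harc with rfl | ⟨j, rfl⟩
    · exact vt_notMem_assignmentKernel hw
    · exact clause_notMem_assignmentKernel hw

lemma exists_membArc_clause_iff {j : Fin nc} :
    (∃ k ∈ assignmentKernel σ, membArc Cl (.inr (.inl j)) k) ↔
      ∃ m, σ (Cl j m).1 = (Cl j m).2 := by
  simp only [membArc_iff_adj (show (.inr (.inl j) : MembVtx U nc) ≠ vq by simp [vq])]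
  constructor
  · rintro ⟨⟨x, b⟩ | k | t, hk, hadj⟩
    · obtain ⟨m, hm⟩ := membGraph_adj_clause_inl.mp hadj
      exact ⟨m, by rwa [hm]⟩
    · exact absurd hk clause_notMem_assignmentKernel
    · obtain rfl : t = false := hk
      simpa [vt] using membGraph_adj_vq.mp hadj.symm
  · rintro ⟨m, hm⟩
    exact ⟨.inl (Cl j m), hm, membGraph_adj_clause_inl.mpr ⟨m, rfl⟩⟩

lemma assignmentKernel_absorbing_iff :
    (∀ v, v ∉ assignmentKernel σ → ∃ k ∈ assignmentKernel σ, membArc Cl v k) ↔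
      ∀ j, ∃ m, σ (Cl j m).1 = (Cl j m).2 := by
  refine ⟨fun h j => exists_membArc_clause_iff.mp (h _ clause_notMem_assignmentKernel), ?_⟩
  rintro hσ (⟨x, b⟩ | j | t) hv
  · refine ⟨.inl (x, σ x), rfl, (membArc_iff_adj (by simp [vq])).mpr ?_⟩
    exact membGraph_adj_inl_inl.mpr ⟨rfl, Ne.symm hv⟩
  · exact exists_membArc_clause_iff.mpr (hσ j)
  · obtain rfl : t = true := Bool.eq_true_of_not_eq_false hv
    exact ⟨vq, vq_mem_assignmentKernel,
      (membArc_iff_adj (by simp [vq])).mpr (membGraph_adj_vt.mpr (.inr rfl))⟩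

lemma kernel_assignmentKernel_iff :
    Kernel Set.univ (membArc Cl) (assignmentKernel σ) ↔ ∀ j, ∃ m, σ (Cl j m).1 = (Cl j m).2 :=
  ⟨fun hK => assignmentKernel_absorbing_iff.mp fun v => hK.2.2 v trivial,
    fun hσ => ⟨Set.subset_univ _, assignmentKernel_independent,
      fun v _ => assignmentKernel_absorbing_iff.mpr hσ v⟩⟩

section kernel

variable {K : Set (MembVtx U nc)} (hK : Kernel Set.univ (membArc Cl) K) (hq : vq ∈ K)
include hK hq

lemma vt_notMem_of_kernel : vt ∉ K :=
  fun h => hK.2.1 _ hq _ h (membArc_vq_iff.mpr (.inl rfl))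

lemma clause_notMem_of_kernel {j : Fin nc} : .inr (.inl j) ∉ K :=
  fun h => hK.2.1 _ hq _ h (membArc_vq_iff.mpr (.inr ⟨j, rfl⟩))

lemma inl_mem_of_kernel_iff {x : U} {b : Bool} : .inl (x, b) ∈ K ↔ .inl (x, !b) ∉ K := by
  have harc {c : Bool} {w : MembVtx U nc} :
      membArc Cl (.inl (x, c)) w ↔ (membGraph Cl).Adj (.inl (x, c)) w :=
    membArc_iff_adj (by simp [vq])
  refine ⟨fun h h' => hK.2.1 _ h _ h' (harc.mpr (by simp)), fun h' => by_contra fun h => ?_⟩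
  obtain ⟨k, hk, hadj⟩ := hK.2.2 _ trivial h
  replace hadj := harc.mp hadj
  rcases k with ⟨y, c⟩ | j | t
  · obtain ⟨rfl, hbc⟩ := membGraph_adj_inl_inl.mp hadj
    rw [Bool.eq_not.mpr hbc.symm] at hk
    exact h' hk
  · exact clause_notMem_of_kernel hK hq hk
  · exact not_membGraph_adj_inl_inr_inr hadj

open Classical in
lemma exists_eq_assignmentKernel_of_kernel : ∃ σ : U → Bool, K = assignmentKernel σ := by
  refine ⟨fun x => decide (.inl (x, true) ∈ K), Set.ext ?_⟩
  rintro (⟨x, _ | _⟩ | j | (_ | _))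
  · simp [inl_mem_of_kernel_iff hK hq (b := false)]
  · simp
  · simp [clause_notMem_of_kernel hK hq]
  · exact iff_of_true hq vq_mem_assignmentKernel
  · exact iff_of_false (vt_notMem_of_kernel hK hq) vt_notMem_assignmentKernel

end kernel

end LD

open LD in
theorem memb_reduction_kernel_iff_satisfiable_general {U : Type*}
    [DecidableEq U] {nc : ℕ} (Cl : Fin nc → Fin 3 → U × Bool) :
    (∃ K : Set (MembVtx U nc), Kernel Set.univ (membArc Cl) K ∧ vq ∈ K) ↔
      Satisfiable Cl := by
  constructor
  · rintro ⟨K, hK, hq⟩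
    obtain ⟨σ, rfl⟩ := exists_eq_assignmentKernel_of_kernel hK hq
    exact ⟨σ, kernel_assignmentKernel_iff.mp hK⟩
  · rintro ⟨σ, hσ⟩
    exact ⟨assignmentKernel σ, kernel_assignmentKernel_iff.mpr hσ, vq_mem_assignmentKernel⟩

open LD in
/-- the MEMB reduction for distance-based profiles.
For a 3-SAT instance `(U, C)`, the digraph `D` built from the shortest-path
distances of the graph `H` (the gadget graph `G_{U,C}` plus the two adjacent
vertices `v_t, v_q`, with `v_t` adjacent to all clause vertices) and the
thresholds `θ(v_q) = 2`, `θ(v) = 1` otherwise, has a kernel containing `v_q`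
iff `(U, C)` is satisfiable. -/
theorem memb_reduction_kernel_iff_satisfiable {U : Type*} [Fintype U]
    [DecidableEq U] {nc : ℕ} (Cl : Fin nc → Fin 3 → U × Bool) :
    (∃ K : Set (MembVtx U nc), Kernel Set.univ (membArc Cl) K ∧ vq ∈ K) ↔
      Satisfiable Cl :=
  memb_reduction_kernel_iff_satisfiable_general Cl
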